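/- Safety of session types is preserved by session type reduction: If safe(T) and T ⇒ T' (reflexive-transitive reduction of session types), then safe(T'). -/

import Mathlib

/- ## Base syntax: sorts, values, operators, expressions -/

/-- Sorts of the calculus: `nat | int | bool | string`. -/
inductive SSort : Type where
  | nat | int | bool | str
deriving DecidableEq

/-- The set of values of each sort. -/
def SSort.carrier : SSort → Type
  | .nat => ℕ
  | .int => ℤ
  | .bool => Bool
  | .str => String

/-- Binary operators `op : S₁,S₂ → S₃` on sorts. -/
structure Op : Type where
  S1 : SSort
  S2 : SSort
  S3 : SSort
  f : S1.carrier → S2.carrier → S3.carrier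

/-- Expressions: values decorated with a security level `ℓ` and a topic `t`,
variables, and binary operators. -/
inductive Expr (L Θ : Type) : Type where
  | val (S : SSort) (v : S.carrier) (ℓ : L) (t : Θ)
  | evar (x : ℕ)
  | binop (o : Op) (e₁ e₂ : Expr L Θ)

/-- `e ↓ v^{ℓ,t}` : `e` evaluates to the value `v` of sort `S`, with level the join
of the levels of the values occurring in `e`, all of which share topic `t`. -/
inductive Eval {L Θ : Type} [Lattice L] : Expr L Θ → (S : SSort) → S.carrier → L → Θ → Prop where
  | val {S v ℓ t} : Eval (.val S v ℓ t) S v ℓ t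
  | binop {o : Op} {e₁ e₂ v₁ v₂ ℓ₁ ℓ₂ t} :
      Eval e₁ o.S1 v₁ ℓ₁ t → Eval e₂ o.S2 v₂ ℓ₂ t →
      Eval (.binop o e₁ e₂) o.S3 (o.f v₁ v₂) (ℓ₁ ⊔ ℓ₂) t

/-- An expression contains no variables. -/
def Expr.closed {L Θ : Type} : Expr L Θ → Prop
  | .val _ _ _ _ => True
  | .evar _ => False
  | .binop _ e₁ e₂ => e₁.closed ∧ e₂.closed

/-- Substitution of an expression (in practice, a value) for a variable in an expression. -/
def Expr.subst {L Θ : Type} (e : Expr L Θ) (x : ℕ) (w : Expr L Θ) : Expr L Θ :=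
  match e with
  | .val S v ℓ t => .val S v ℓ t
  | .evar y => if y = x then w else .evar y
  | .binop o e₁ e₂ => .binop o (e₁.subst x w) (e₂.subst x w)

/- ## Session types -/

/-- Session types: unions of outputs `⋁ᵢ q!λᵢ(Sᵢ^{ℓᵢ,tᵢ}).Tᵢ` (a branch list),
intersections of inputs `⋀ᵢ p?λᵢ(Sᵢ^{ℓᵢ,tᵢ}).Tᵢ`, recursion, type variables and `end`. -/
inductive SType (L Θ Part Lab : Type) : Type where
  | out (q : Part) (bs : List (Lab × SSort × L × Θ × SType L Θ Part Lab))
  | inp (p : Part) (bs : List (Lab × SSort × L × Θ × SType L Θ Part Lab))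
  | mu (T : SType L Θ Part Lab)
  | tvar (n : ℕ)
  | endt

mutual
/-- Subtyping of session types: `end ≤ end`; a union of outputs over `I` is ≤ the union
over `I∪J` (branchwise, with identical label, sort, level and topic); an intersection of
inputs over `I∪J` is ≤ the intersection over `I`. -/
inductive SubT {L Θ Part Lab : Type} : SType L Θ Part Lab → SType L Θ Part Lab → Prop where
  | endt : SubT .endt .endt
  | out {q bs bs'} : SubOutB bs bs' → SubT (.out q bs) (.out q bs')
  | inp {p bs bs'} : SubInpB bs' bs → SubT (.inp p bs) (.inp p bs')

/-- Branchwise condition for output subtyping: every branch of the first list occurs in the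
second list with the same label, sort, level and topic, and a `SubT`-larger continuation. -/
inductive SubOutB {L Θ Part Lab : Type} :
    List (Lab × SSort × L × Θ × SType L Θ Part Lab) →
    List (Lab × SSort × L × Θ × SType L Θ Part Lab) → Prop where
  | nil {l₂} : SubOutB [] l₂
  | cons {lab S ℓ t T T' l₁ l₂} : (lab, S, ℓ, t, T') ∈ l₂ → SubT T T' →
      SubOutB l₁ l₂ → SubOutB ((lab, S, ℓ, t, T) :: l₁) l₂

/-- Branchwise condition for input subtyping: every branch of the first list occurs in the
second list with the same label, sort, level and topic, and a `SubT`-smaller continuation. -/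
inductive SubInpB {L Θ Part Lab : Type} :
    List (Lab × SSort × L × Θ × SType L Θ Part Lab) →
    List (Lab × SSort × L × Θ × SType L Θ Part Lab) → Prop where
  | nil {l₂} : SubInpB [] l₂
  | cons {lab S ℓ t T T' l₁ l₂} : (lab, S, ℓ, t, T') ∈ l₂ → SubT T' T →
      SubInpB l₁ l₂ → SubInpB ((lab, S, ℓ, t, T) :: l₁) l₂
end

/-- `IsUnion T₁ T₂ T` : `T` is the union `T₁ ∨ T₂` of the two unions of outputs `T₁`, `T₂`. -/
inductive IsUnion {L Θ Part Lab : Type} :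
    SType L Θ Part Lab → SType L Θ Part Lab → SType L Θ Part Lab → Prop where
  | mk (q bs₁ bs₂) : IsUnion (.out q bs₁) (.out q bs₂) (.out q (bs₁ ++ bs₂))

/-- `IsInter T₁ T₂ T` : `T` is the intersection `T₁ ∧ T₂` of the two intersections of
inputs `T₁`, `T₂`. -/
inductive IsInter {L Θ Part Lab : Type} :
    SType L Θ Part Lab → SType L Θ Part Lab → SType L Θ Part Lab → Prop where
  | mk (p bs₁ bs₂) : IsInter (.inp p bs₁) (.inp p bs₂) (.inp p (bs₁ ++ bs₂))

/-- Agreement `⟨ℓ,t⟩ ≺ T` of a level/topic pair with a session type: `T` only sends values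
of level `⊒ ℓ` on topics related to `t` (`indep` is the independence relation on topics). -/
inductive Agrees {L Θ Part Lab : Type} [Lattice L] (indep : Θ → Θ → Prop) (ℓ : L) (t : Θ) :
    SType L Θ Part Lab → Prop where
  | endt : Agrees indep ℓ t .endt
  | out {q bs} :
      (∀ b ∈ bs, Agrees indep ℓ t b.2.2.2.2) →
      (∀ b ∈ bs, ℓ ≤ b.2.2.1 ∨ indep t b.2.2.2.1) →
      Agrees indep ℓ t (.out q bs)
  | inp {p bs} :
      (∀ b ∈ bs, Agrees indep ℓ t b.2.2.2.2) →
      Agrees indep ℓ t (.inp p bs)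

/-- Safety of session types, w.r.t. the reading levels `ρ` and the independence
relation `indep` on topics. -/
inductive Safe {L Θ Part Lab : Type} [Lattice L] (ρ : Part → Θ → L) (indep : Θ → Θ → Prop) :
    SType L Θ Part Lab → Prop where
  | endt : Safe ρ indep .endt
  | out {q bs} :
      (∀ b ∈ bs, Safe ρ indep b.2.2.2.2) →
      (∀ b ∈ bs, b.2.2.1 ≤ ρ q b.2.2.2.1) →
      Safe ρ indep (.out q bs)
  | inp {p bs} :
      (∀ b ∈ bs, Safe ρ indep b.2.2.2.2) →
      (∀ b ∈ bs, Agrees indep b.2.2.1 b.2.2.2.1 b.2.2.2.2) →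
      Safe ρ indep (.inp p bs)

/-- One step of reduction of session types: `T ∨ T' ⇒ T` (selection of a sub-union),
`p!λ(S^{ℓ,t}).T ⇒ T` and `⋀ᵢ p?λᵢ(Sᵢ^{ℓᵢ,tᵢ}).Tᵢ ⇒ Tᵢ`. -/
inductive TStep {L Θ Part Lab : Type} : SType L Θ Part Lab → SType L Θ Part Lab → Prop where
  | union {q : Part} {bs bs' : List (Lab × SSort × L × Θ × SType L Θ Part Lab)} :
      bs' ⊆ bs → TStep (.out q bs) (.out q bs')
  | out {q : Part} {lab : Lab} {S : SSort} {ℓ : L} {t : Θ} {T : SType L Θ Part Lab} :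
      TStep (.out q [(lab, S, ℓ, t, T)]) T
  | inp {p : Part} {bs} {lab : Lab} {S : SSort} {ℓ : L} {t : Θ} {T : SType L Θ Part Lab} :
      (lab, S, ℓ, t, T) ∈ bs → TStep (.inp p bs) T

/-- Reduction of session types: the smallest preorder containing `TStep`. -/
def RedT {L Θ Part Lab : Type} : SType L Θ Part Lab → SType L Θ Part Lab → Prop :=
  Relation.ReflTransGen TStep
/- ## Processes and multiparty sessions -/

/-- Processes: `q!λ(e).P | p?λ(x).P | P⊕P | P+P | μX.P | X | 0`. -/
inductive Proc (L Θ Part Lab : Type) : Type where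
  | send (q : Part) (lab : Lab) (e : Expr L Θ) (P : Proc L Θ Part Lab)
  | recv (p : Part) (lab : Lab) (x : ℕ) (P : Proc L Θ Part Lab)
  | ichoice (P Q : Proc L Θ Part Lab)
  | echoice (P Q : Proc L Θ Part Lab)
  | mu (X : ℕ) (P : Proc L Θ Part Lab)
  | pvar (X : ℕ)
  | nil

/-- Substitution of an expression (value) for an expression variable in a process. -/
def Proc.substE {L Θ Part Lab : Type} : Proc L Θ Part Lab → ℕ → Expr L Θ → Proc L Θ Part Lab
  | .send q lab e P, x, w => .send q lab (e.subst x w) (P.substE x w)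
  | .recv p lab y P, x, w => .recv p lab y (if y = x then P else P.substE x w)
  | .ichoice P Q, x, w => .ichoice (P.substE x w) (Q.substE x w)
  | .echoice P Q, x, w => .echoice (P.substE x w) (Q.substE x w)
  | .mu X P, x, w => .mu X (P.substE x w)
  | .pvar X, _, _ => .pvar X
  | .nil, _, _ => .nil

/-- Substitution of a process for a process variable in a process. -/
def Proc.substP {L Θ Part Lab : Type} : Proc L Θ Part Lab → ℕ → Proc L Θ Part Lab → Proc L Θ Part Lab
  | .send q lab e P, X, R => .send q lab e (P.substP X R)
  | .recv p lab y P, X, R => .recv p lab y (P.substP X R)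
  | .ichoice P Q, X, R => .ichoice (P.substP X R) (Q.substP X R)
  | .echoice P Q, X, R => .echoice (P.substP X R) (Q.substP X R)
  | .mu Y P, X, R => if Y = X then .mu Y P else .mu Y (P.substP X R)
  | .pvar Y, X, R => if Y = X then R else .pvar Y
  | .nil, _, _ => .nil

/-- Structural congruence on processes: commutativity and associativity of the two
choices, unfolding of recursion, closed under contexts and equivalence. -/
inductive PCong {L Θ Part Lab : Type} : Proc L Θ Part Lab → Proc L Θ Part Lab → Prop where
  | refl (P) : PCong P P
  | symm {P Q} : PCong P Q → PCong Q P
  | trans {P Q R} : PCong P Q → PCong Q R → PCong P R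
  | ichoice_comm (P Q) : PCong (.ichoice P Q) (.ichoice Q P)
  | ichoice_assoc (P Q R) : PCong (.ichoice (.ichoice P Q) R) (.ichoice P (.ichoice Q R))
  | echoice_comm (P Q) : PCong (.echoice P Q) (.echoice Q P)
  | echoice_assoc (P Q R) : PCong (.echoice (.echoice P Q) R) (.echoice P (.echoice Q R))
  | unfold (X P) : PCong (.mu X P) (P.substP X (.mu X P))
  | send_ctx {P P'} (q lab e) : PCong P P' → PCong (.send q lab e P) (.send q lab e P')
  | recv_ctx {P P'} (p lab x) : PCong P P' → PCong (.recv p lab x P) (.recv p lab x P')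
  | ichoice_ctx {P P' Q Q'} : PCong P P' → PCong Q Q' → PCong (.ichoice P Q) (.ichoice P' Q')
  | echoice_ctx {P P' Q Q'} : PCong P P' → PCong Q Q' → PCong (.echoice P Q) (.echoice P' Q')
  | mu_ctx {P P'} (X) : PCong P P' → PCong (.mu X P) (.mu X P')

/-- Actions of processes: `τ`, output `q!λ(v^{ℓ,t})`, input `p?λ(v^{ℓ,t})`. -/
inductive PAct (L Θ Part Lab : Type) : Type where
  | tau
  | out (q : Part) (lab : Lab) (S : SSort) (v : S.carrier) (ℓ : L) (t : Θ)
  | inp (p : Part) (lab : Lab) (S : SSort) (v : S.carrier) (ℓ : L) (t : Θ)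

/-- The LTS for processes. -/
inductive PStep {L Θ Part Lab : Type} [Lattice L] :
    Proc L Θ Part Lab → PAct L Θ Part Lab → Proc L Θ Part Lab → Prop where
  | send {e : Expr L Θ} {S v ℓ t q lab P} : Eval e S v ℓ t →
      PStep (.send q lab e P) (.out q lab S v ℓ t) P
  | recv {p lab x P S v ℓ t} :
      PStep (.recv p lab x P) (.inp p lab S v ℓ t) (P.substE x (.val S v ℓ t))
  | ichoice {P Q} : PStep (.ichoice P Q) .tau P
  | echoice {P Q α P'} : PStep P α P' → α ≠ .tau → PStep (.echoice P Q) α P'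
  | struct {P₁' P₁ α P₂ P₂'} : PCong P₁' P₁ → PStep P₁ α P₂ → PCong P₂ P₂' →
      PStep P₁' α P₂'

/-- Multiparty sessions: parallel compositions of participant/process pairs `p ▷ P`. -/
inductive Sess (L Θ Part Lab : Type) : Type where
  | single (p : Part) (P : Proc L Θ Part Lab)
  | par (N₁ N₂ : Sess L Θ Part Lab)

/-- Structural congruence on sessions. -/
inductive NCong {L Θ Part Lab : Type} : Sess L Θ Part Lab → Sess L Θ Part Lab → Prop where
  | refl (N) : NCong N N
  | symm {N N'} : NCong N N' → NCong N' N
  | trans {N₁ N₂ N₃} : NCong N₁ N₂ → NCong N₂ N₃ → NCong N₁ N₃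
  | proc {P Q} (p) : PCong P Q → NCong (.single p P) (.single p Q)
  | nil (p N) : NCong (.par (.single p .nil) N) N
  | comm (N₁ N₂) : NCong (.par N₁ N₂) (.par N₂ N₁)
  | assoc (N₁ N₂ N₃) : NCong (.par (.par N₁ N₂) N₃) (.par N₁ (.par N₂ N₃))
  | par_ctx {N₁ N₁' N₂ N₂'} : NCong N₁ N₁' → NCong N₂ N₂' → NCong (.par N₁ N₂) (.par N₁' N₂')

/-- Labels of session transitions: `τ` or a message `p v^{ℓ,t} λ→ q`. -/
inductive SLabel (L Θ Part Lab : Type) : Type where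
  | tau
  | msg (p : Part) (lab : Lab) (S : SSort) (v : S.carrier) (ℓ : L) (t : Θ) (q : Part)

/-- The LTS for sessions. -/
inductive NStep {L Θ Part Lab : Type} [Lattice L] :
    Sess L Θ Part Lab → SLabel L Θ Part Lab → Sess L Θ Part Lab → Prop where
  | comm {P P' Q Q' : Proc L Θ Part Lab} {p q lab S v ℓ t} :
      PStep P (.out q lab S v ℓ t) P' → PStep Q (.inp p lab S v ℓ t) Q' →
      NStep (.par (.single p P) (.single q Q)) (.msg p lab S v ℓ t q)
            (.par (.single p P') (.single q Q'))
  | tau {P P' p} : PStep P .tau P' → NStep (.single p P) .tau (.single p P')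
  | ctx {N κ N' N''} : NStep N κ N' → NStep (.par N N'') κ (.par N' N'')
  | struct {M N κ N' M'} : NCong M N → NStep N κ N' → NCong N' M' → NStep M κ M'

/-- `Traces N σ N'` : `N` performs the sequence `σ` of transition labels ending in `N'`. -/
inductive Traces {L Θ Part Lab : Type} [Lattice L] :
    Sess L Θ Part Lab → List (SLabel L Θ Part Lab) → Sess L Θ Part Lab → Prop where
  | nil (N) : Traces N [] N
  | cons {N κ N' σ N''} : NStep N κ N' → Traces N' σ N'' → Traces N (κ :: σ) N''

/-- `σ` is a trace of the session `N`. -/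
def HasTrace {L Θ Part Lab : Type} [Lattice L]
    (N : Sess L Θ Part Lab) (σ : List (SLabel L Θ Part Lab)) : Prop :=
  ∃ N', Traces N σ N'

/- ## Global types, projection, residuals -/

/-- Global types `G ::= p→q:{λᵢ(Sᵢ^{ℓᵢ,tᵢ}).Gᵢ}ᵢ | μt.G | t | end`. -/
inductive GType (L Θ Part Lab : Type) : Type where
  | comm (p q : Part) (bs : List (Lab × SSort × L × Θ × GType L Θ Part Lab))
  | mu (G : GType L Θ Part Lab)
  | gvar (n : ℕ)
  | endt

/-- The participant `r` occurs in the global type `G`. -/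
inductive Occurs {L Θ Part Lab : Type} (r : Part) : GType L Θ Part Lab → Prop where
  | src {q bs} : Occurs r (.comm r q bs)
  | tgt {p bs} : Occurs r (.comm p r bs)
  | cont {p q bs b} : b ∈ bs → Occurs r b.2.2.2.2 → Occurs r (.comm p q bs)
  | mu {G} : Occurs r G → Occurs r (.mu G)

mutual
/-- `Proj G r T` : the projection of the global type `G` onto participant `r` is defined
and equal to the session type `T`. -/
inductive Proj {L Θ Part Lab : Type} : GType L Θ Part Lab → Part → SType L Θ Part Lab → Prop where
  | src {p q bs bs'} : p ≠ q → ProjB bs p bs' → Proj (.comm p q bs) p (.out q bs')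
  | tgt {p q bs bs'} : p ≠ q → ProjB bs q bs' → Proj (.comm p q bs) q (.inp p bs')
  | other {p q r bs T} : r ≠ p → r ≠ q → bs ≠ [] →
      (∀ b ∈ bs, Proj b.2.2.2.2 r T) → Proj (.comm p q bs) r T
  | mu_occ {G r T} : Occurs r G → Proj G r T → Proj (.mu G) r T
  | mu_nocc {G r} : ¬ Occurs r G → Proj (.mu G) r .endt
  | gvar {n r} : Proj (.gvar n) r (.tvar n)
  | endt {r} : Proj .endt r .endt

/-- Branchwise projection of the branches of a global type. -/
inductive ProjB {L Θ Part Lab : Type} :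
    List (Lab × SSort × L × Θ × GType L Θ Part Lab) → Part →
    List (Lab × SSort × L × Θ × SType L Θ Part Lab) → Prop where
  | nil {r} : ProjB [] r []
  | cons {lab S ℓ t G T r gs ts} : Proj G r T → ProjB gs r ts →
      ProjB ((lab, S, ℓ, t, G) :: gs) r ((lab, S, ℓ, t, T) :: ts)
end

/-- A global type is projectable when its projection on every participant is defined. -/
def Projectable {L Θ Part Lab : Type} (G : GType L Θ Part Lab) : Prop :=
  ∀ r : Part, ∃ T : SType L Θ Part Lab, Proj G r T

mutual
/-- `Resid p lab q G G'` : `G'` is the residual `G⌈p λ q⌉` of `G` after the communication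
of label `lab` from `p` to `q`. -/
inductive Resid {L Θ Part Lab : Type} (p : Part) (lab : Lab) (q : Part) :
    GType L Θ Part Lab → GType L Θ Part Lab → Prop where
  | head {bs S ℓ t G₀} : (lab, S, ℓ, t, G₀) ∈ bs → Resid p lab q (.comm p q bs) G₀
  | skip {r s bs bs'} : ¬(r = p ∧ s = q ∧ lab ∈ bs.map (fun b => b.1)) →
      ResidB p lab q bs bs' → Resid p lab q (.comm r s bs) (.comm r s bs')
  | mu {G G'} : Resid p lab q G G' → Resid p lab q (.mu G) (.mu G')

/-- Branchwise residual of the branches of a global type. -/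
inductive ResidB {L Θ Part Lab : Type} (p : Part) (lab : Lab) (q : Part) :
    List (Lab × SSort × L × Θ × GType L Θ Part Lab) →
    List (Lab × SSort × L × Θ × GType L Θ Part Lab) → Prop where
  | nil : ResidB p lab q [] []
  | cons {l S ℓ t G G' gs gs'} : Resid p lab q G G' → ResidB p lab q gs gs' →
      ResidB p lab q ((l, S, ℓ, t, G) :: gs) ((l, S, ℓ, t, G') :: gs')
end

/-- One step of reduction of global types: erasure of one communication. -/
def GStep {L Θ Part Lab : Type} (G G' : GType L Θ Part Lab) : Prop :=
  ∃ (p : Part) (lab : Lab) (q : Part), Resid p lab q G G'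

/-- Reduction of global types: the smallest preorder containing `GStep`. -/
def RedG {L Θ Part Lab : Type} : GType L Θ Part Lab → GType L Θ Part Lab → Prop :=
  Relation.ReflTransGen GStep
/- ## Typing -/

/-- Typing environments: expression variables are mapped to decorated sorts `S^{ℓ,t}`,
process variables to session types. -/
structure TEnv (L Θ Part Lab : Type) : Type where
  evar : ℕ → Option (SSort × L × Θ)
  pvar : ℕ → Option (SType L Θ Part Lab)

/-- The empty environment. -/
def TEnv.empty {L Θ Part Lab : Type} : TEnv L Θ Part Lab :=
  ⟨fun _ => none, fun _ => none⟩

/-- `Γ, x : S^{ℓ,t}`. -/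
def TEnv.updE {L Θ Part Lab : Type} (Γ : TEnv L Θ Part Lab) (x : ℕ)
    (d : SSort × L × Θ) : TEnv L Θ Part Lab :=
  ⟨fun y => if y = x then some d else Γ.evar y, Γ.pvar⟩

/-- `Γ, X : T`. -/
def TEnv.updP {L Θ Part Lab : Type} (Γ : TEnv L Θ Part Lab) (X : ℕ)
    (T : SType L Θ Part Lab) : TEnv L Θ Part Lab :=
  ⟨Γ.evar, fun Y => if Y = X then some T else Γ.pvar Y⟩

/-- Typing of expressions: `Γ ⊢ e : S^{ℓ,t}`. -/
inductive ETyped {L Θ Part Lab : Type} [Lattice L] (Γ : TEnv L Θ Part Lab) :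
    Expr L Θ → SSort → L → Θ → Prop where
  | evar {x S ℓ t} : Γ.evar x = some (S, ℓ, t) → ETyped Γ (.evar x) S ℓ t
  | val {S v ℓ t} : ETyped Γ (.val S v ℓ t) S ℓ t
  | binop {o : Op} {e₁ e₂ ℓ₁ ℓ₂ t} : ETyped Γ e₁ o.S1 ℓ₁ t → ETyped Γ e₂ o.S2 ℓ₂ t →
      ETyped Γ (.binop o e₁ e₂) o.S3 (ℓ₁ ⊔ ℓ₂) t

/-- Typing of processes `Γ ⊢ P : T`, where only safe session types are allowed:
outputs respect the reading level of the receiver and the continuation type of an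
input agrees with the received level and topic pair. -/
inductive PTyped {L Θ Part Lab : Type} [Lattice L]
    (ρ : Part → Θ → L) (indep : Θ → Θ → Prop) :
    TEnv L Θ Part Lab → Proc L Θ Part Lab → SType L Θ Part Lab → Prop where
  | send {Γ e S ℓ t q lab P T} : ETyped Γ e S ℓ t → PTyped ρ indep Γ P T →
      ℓ ≤ ρ q t →
      PTyped ρ indep Γ (.send q lab e P) (.out q [(lab, S, ℓ, t, T)])
  | recv {Γ x S ℓ t p lab P T} : PTyped ρ indep (Γ.updE x (S, ℓ, t)) P T →
      Agrees indep ℓ t T →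
      PTyped ρ indep Γ (.recv p lab x P) (.inp p [(lab, S, ℓ, t, T)])
  | ichoice {Γ P Q T₁ T₂ T} : PTyped ρ indep Γ P T₁ → PTyped ρ indep Γ Q T₂ →
      IsUnion T₁ T₂ T → PTyped ρ indep Γ (.ichoice P Q) T
  | echoice {Γ P Q T₁ T₂ T} : PTyped ρ indep Γ P T₁ → PTyped ρ indep Γ Q T₂ →
      IsInter T₁ T₂ T → PTyped ρ indep Γ (.echoice P Q) T
  | mu {Γ X P T} : Safe ρ indep T → PTyped ρ indep (Γ.updP X T) P T →
      PTyped ρ indep Γ (.mu X P) T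
  | pvar {Γ X T} : Γ.pvar X = some T → PTyped ρ indep Γ (.pvar X) T
  | nil {Γ} : PTyped ρ indep Γ .nil .endt

/-- The list of participant/process pairs of a session. -/
def Sess.toList {L Θ Part Lab : Type} : Sess L Θ Part Lab → List (Part × Proc L Θ Part Lab)
  | .single p P => [(p, P)]
  | .par N₁ N₂ => N₁.toList ++ N₂.toList

/-- Typing of sessions `⊢ N : G` (rule t-sess): the participants are pairwise distinct,
every process has a session type which is a subtype of the projection of `G` on the
corresponding participant, and all participants of `G` occur in the session. -/
def NTyped {L Θ Part Lab : Type} [Lattice L]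
    (ρ : Part → Θ → L) (indep : Θ → Θ → Prop)
    (N : Sess L Θ Part Lab) (G : GType L Θ Part Lab) : Prop :=
  (N.toList.map Prod.fst).Nodup ∧
  (∀ pP ∈ N.toList, ∃ T Tp : SType L Θ Part Lab,
      PTyped ρ indep TEnv.empty pP.2 T ∧ Proj G pP.1 Tp ∧ SubT T Tp) ∧
  (∀ r : Part, Occurs r G → r ∈ N.toList.map Prod.fst)

theorem Safe.of_tStep {L Θ Part Lab : Type} [Lattice L] {ρ : Part → Θ → L}
    {indep : Θ → Θ → Prop} {T T' : SType L Θ Part Lab}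
    (h : Safe ρ indep T) (hs : TStep T T') : Safe ρ indep T' := by
  cases hs with
  | union hsub =>
    obtain _ | ⟨hcont, hlevel⟩ := h
    exact .out (fun b hb => hcont b (hsub hb)) (fun b hb => hlevel b (hsub hb))
  | out =>
    obtain _ | ⟨hcont, -⟩ := h
    exact hcont _ (List.mem_singleton_self _)
  | inp hmem =>
    obtain _ | _ | ⟨hcont, -⟩ := h
    exact hcont _ hmem

/-- **Safety is preserved by session type reduction.** If `safe(T)` and `T ⇒* T'`,
then `safe(T')`. -/
theorem safe_preserved_by_reduction {L Θ Part Lab : Type} [Lattice L]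
    (ρ : Part → Θ → L) (indep : Θ → Θ → Prop) (T T' : SType L Θ Part Lab)
    (h : Safe ρ indep T) (hr : RedT T T') :
    Safe ρ indep T' := by
  induction hr with
  | refl => exact h
  | tail _ hs ih => exact ih.of_tStep hs
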